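/- Let d ≥ 2 and suppose t_1 < t_2 < ⋯ < t_d are real numbers and (α_i, β_i) ⊂ (t_i, t_{i+1}) for i = 1,...,d-1. Write Δ_i = β_i - α_i and suppose f = Σ_{i=1}^{d-1} c_i χ_{(α_i,β_i)} with c_i ≥ 0. Fix p ∈ {1,...,d-1} and suppose the exponents {e_i : i = 1,...,d-1, i ≠ p} are an enumeration of {1,2,...,d-2}. Then there is a constant c(d) > 0 depending only on d such that ∫_{t_1}^{t_d} f(u) ψ(u; t_1,...,t_d) du ≥ c(d) · c_p · Δ_p^{d-1} · ∏_{1 ≤ i ≤ d-1, i ≠ p} Δ_i^{e_i}. -/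

import Mathlib

/-!
Since `f ≥ c_p χ_{(α_p, β_p)}` and `ψ ≥ 0`, it suffices to bound `∫_{α_p}^{β_p} ψ(u; t) du` from
below by a multiple of `∏_i Δ_i ^ E_i`, where `E_p = d - 1` and `E_i = e_i` otherwise, so that `E`
enumerates `{1, …, d - 1}`. This goes by induction on `d`. Let `E_q = 1` and let the variables `s`
in `ψ(u; t) = ∫ ψ(u; s) ds` run only over the middle thirds of the intervals `(α_i, β_i)`. For
`i ≠ q`, the third of `(α_i, β_i)` facing the `q`-th interval then lies in a gap of `s`, so the
induction hypothesis applies to `s`, these thirds and the exponents `E_i - 1`; the integration over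
`s` gives back one power of every `Δ_i`, up to powers of `3`.
-/

open MeasureTheory

/-- The function ψ(u; t_1,...,t_d): for d = 2, ψ(u; t_1,t_2) = χ_{[t_1,t_2]}(u);
inductively, ψ(u; t_1,...,t_d) = ∫_{t_1}^{t_2} ⋯ ∫_{t_{d-1}}^{t_d} ψ(u; s_1,...,s_{d-1})
ds_1 ⋯ ds_{d-1}. -/
noncomputable def psi : (n : ℕ) → ℝ → (Fin n → ℝ) → ℝ
  | 0, _, _ => 0
  | 1, _, _ => 0
  | 2, u, t => Set.indicator (Set.Icc (t 0) (t 1)) (fun _ => (1 : ℝ)) u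
  | n + 3, u, t =>
      ∫ s in Set.univ.pi (fun i : Fin (n + 2) => Set.Ioo (t i.castSucc) (t i.succ)),
        psi (n + 2) u s

open Set

def interlacingBox {n : ℕ} (t : Fin (n + 1) → ℝ) : Set (Fin n → ℝ) :=
  Set.univ.pi fun i => Ioo (t i.castSucc) (t i.succ)

lemma measurableSet_interlacingBox {n : ℕ} (t : Fin (n + 1) → ℝ) :
    MeasurableSet (interlacingBox t) :=
  .univ_pi fun _ => measurableSet_Ioo

lemma psi_add_three (n : ℕ) (u : ℝ) (t : Fin (n + 3) → ℝ) :
    psi (n + 3) u t = ∫ s in interlacingBox t, psi (n + 2) u s := rfl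

lemma psi_nonneg : ∀ (n : ℕ) (u : ℝ) (t : Fin n → ℝ), 0 ≤ psi n u t
  | 0, _, _ => le_rfl
  | 1, _, _ => le_rfl
  | 2, u, _ => Set.indicator_nonneg (fun _ _ => zero_le_one) u
  | _ + 3, u, _ => setIntegral_nonneg (measurableSet_interlacingBox _) fun s _ => psi_nonneg _ u s

lemma measurableSet_setOf_mem_interlacingBox {α : Type*} [MeasurableSpace α] {n : ℕ}
    {t : α → Fin (n + 1) → ℝ} {s : α → Fin n → ℝ} (ht : Measurable t) (hs : Measurable s) :
    MeasurableSet {a | s a ∈ interlacingBox (t a)} := by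
  have : {a | s a ∈ interlacingBox (t a)}
      = ⋂ i, {a | t a i.castSucc < s a i} ∩ {a | s a i < t a i.succ} := by
    ext; simp [interlacingBox]
  rw [this]
  exact .iInter fun i => (measurableSet_lt ht.eval hs.eval).inter
    (measurableSet_lt hs.eval ht.eval)

lemma measurable_psi : ∀ n : ℕ, Measurable fun x : ℝ × (Fin n → ℝ) => psi n x.1 x.2
  | 0 | 1 => measurable_const
  | 2 => by
      change Measurable (({x : ℝ × (Fin 2 → ℝ) | x.2 0 ≤ x.1} ∩ {x | x.1 ≤ x.2 1}).indicator
        fun _ => 1)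
      exact measurable_const.indicator <| (measurableSet_le (by fun_prop) measurable_fst).inter
        (measurableSet_le measurable_fst (by fun_prop))
  | n + 3 => by
      have hF : Measurable ({y : (ℝ × (Fin (n + 3) → ℝ)) × (Fin (n + 2) → ℝ) |
          y.2 ∈ interlacingBox y.1.2}.indicator fun y => psi (n + 2) y.1.1 y.2) :=
        ((measurable_psi (n + 2)).comp (measurable_fst.fst.prodMk measurable_snd)).indicator
          (measurableSet_setOf_mem_interlacingBox measurable_fst.snd measurable_snd)
      convert (hF.stronglyMeasurable.integral_prod_right' (ν := volume)).measurable using 2 with x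
      exact (integral_indicator (measurableSet_interlacingBox _)).symm

lemma norm_le_of_mem_interlacingBox {n : ℕ} {t : Fin (n + 1) → ℝ} {s : Fin n → ℝ}
    (hs : s ∈ interlacingBox t) : ‖s‖ ≤ ‖t‖ := by
  refine (pi_norm_le_iff_of_nonneg (norm_nonneg t)).2 fun i => ?_
  obtain ⟨hlo, hhi⟩ := hs i (mem_univ i)
  have h₁ := abs_le.1 (norm_le_pi_norm t i.castSucc)
  have h₂ := abs_le.1 (norm_le_pi_norm t i.succ)
  exact abs_le.2 ⟨by linarith, by linarith⟩

lemma exists_psi_le : ∀ (n : ℕ) (R : ℝ), ∃ C, ∀ u (t : Fin n → ℝ), ‖t‖ ≤ R → psi n u t ≤ C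
  | 0, _ | 1, _ => ⟨0, fun _ _ _ => le_rfl⟩
  | 2, _ => ⟨1, fun u _ _ => Set.indicator_le_self' (fun _ _ => zero_le_one) u⟩
  | n + 3, R => by
      obtain ⟨C, hC⟩ := exists_psi_le (n + 2) R
      refine ⟨|C| * volume.real (Metric.closedBall (0 : Fin (n + 2) → ℝ) R), fun u t ht => ?_⟩
      have hball : interlacingBox t ⊆ Metric.closedBall 0 R := fun s hs =>
        mem_closedBall_zero_iff.2 ((norm_le_of_mem_interlacingBox hs).trans ht)
      calc psi (n + 3) u t ≤ ‖∫ s in interlacingBox t, psi (n + 2) u s‖ :=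
            (psi_add_three n u t).trans_le (Real.le_norm_self _)
        _ ≤ |C| * volume.real (interlacingBox t) := by
          refine norm_setIntegral_le_of_norm_le_const
            ((measure_mono hball).trans_lt measure_closedBall_lt_top) fun s hs => ?_
          rw [Real.norm_of_nonneg (psi_nonneg _ _ _)]
          exact (hC u s ((norm_le_of_mem_interlacingBox hs).trans ht)).trans (le_abs_self C)
        _ ≤ |C| * volume.real (Metric.closedBall (0 : Fin (n + 2) → ℝ) R) := by
          gcongr
          exact measure_closedBall_lt_top.ne

lemma integrableOn_psi_interlacingBox {n : ℕ} (u : ℝ) (t : Fin (n + 1) → ℝ) :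
    IntegrableOn (fun s => psi n u s) (interlacingBox t) := by
  obtain ⟨C, hC⟩ := exists_psi_le n ‖t‖
  have hball : interlacingBox t ⊆ Metric.closedBall 0 ‖t‖ := fun s hs =>
    mem_closedBall_zero_iff.2 (norm_le_of_mem_interlacingBox hs)
  refine Measure.integrableOn_of_bounded (M := C)
    ((measure_mono hball).trans_lt measure_closedBall_lt_top).ne
    ((measurable_psi n).comp (measurable_const.prodMk measurable_id)).aestronglyMeasurable ?_
  filter_upwards [ae_restrict_mem (measurableSet_interlacingBox t)] with s hs
  rw [Real.norm_of_nonneg (psi_nonneg _ _ _)]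
  exact hC u s (norm_le_of_mem_interlacingBox hs)

lemma integrableOn_psi {n : ℕ} (t : Fin n → ℝ) {s : Set ℝ} (hs : volume s ≠ ⊤) :
    IntegrableOn (fun u => psi n u t) s := by
  obtain ⟨C, hC⟩ := exists_psi_le n ‖t‖
  refine Measure.integrableOn_of_bounded (M := C) hs
    ((measurable_psi n).comp (measurable_id.prodMk measurable_const)).aestronglyMeasurable
    (.of_forall fun u => ?_)
  rw [Real.norm_of_nonneg (psi_nonneg _ _ _)]
  exact hC u t le_rfl

lemma ofReal_psi_add_three (n : ℕ) (u : ℝ) (t : Fin (n + 3) → ℝ) :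
    ENNReal.ofReal (psi (n + 3) u t)
      = ∫⁻ s in interlacingBox t, ENNReal.ofReal (psi (n + 2) u s) := by
  rw [psi_add_three]
  exact ofReal_integral_eq_lintegral_ofReal (integrableOn_psi_interlacingBox u t)
    (.of_forall fun s => psi_nonneg _ u s)

lemma image_univ_eq_Icc {n : ℕ} {E : Fin n → ℕ} (hinj : Function.Injective E)
    (hE : ∀ i, E i ∈ Finset.Icc 1 n) : Finset.univ.image E = Finset.Icc 1 n :=
  Finset.eq_of_subset_of_card_le (Finset.image_subset_iff.2 fun i _ => hE i)
    (by simp [Finset.card_image_of_injective _ hinj])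

lemma sum_eq_sum_Icc {n : ℕ} {E : Fin n → ℕ} (hinj : Function.Injective E)
    (hE : ∀ i, E i ∈ Finset.Icc 1 n) : ∑ i, E i = ∑ k ∈ Finset.Icc 1 n, k := by
  rw [← image_univ_eq_Icc hinj hE, Finset.sum_image fun i _ j _ h => hinj h]

lemma injective_pred_succAbove_and_mem_Icc {n : ℕ} {E : Fin (n + 1) → ℕ}
    (hinj : Function.Injective E) (hE : ∀ i, E i ∈ Finset.Icc 1 (n + 1)) {q : Fin (n + 1)}
    (hq : E q = 1) :
    Function.Injective (fun j => E (q.succAbove j) - 1) ∧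
      ∀ j, E (q.succAbove j) - 1 ∈ Finset.Icc 1 n := by
  have two_le j : 2 ≤ E (q.succAbove j) := by
    have := Finset.mem_Icc.1 (hE (q.succAbove j))
    have := hinj.ne (Fin.succAbove_ne q j)
    omega
  refine ⟨fun i j hij => Fin.succAbove_right_injective (p := q) (hinj ?_), fun j => ?_⟩
  · have := two_le i
    have := two_le j
    simp only at hij
    omega
  · have := two_le j
    have := Finset.mem_Icc.1 (hE (q.succAbove j))
    rw [Finset.mem_Icc]
    omega

lemma prod_pow_pred_succAbove_mul_prod {M : Type*} [CommMonoid M] {n : ℕ} (x : Fin (n + 1) → M)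
    {E : Fin (n + 1) → ℕ} {q : Fin (n + 1)} (hq : E q = 1) (hE : ∀ j, E (q.succAbove j) ≠ 0) :
    (∏ j, x (q.succAbove j) ^ (E (q.succAbove j) - 1)) * ∏ i, x i = ∏ i, x i ^ E i := by
  rw [Fin.prod_univ_succAbove x q, Fin.prod_univ_succAbove (fun i => x i ^ E i) q, hq, pow_one,
    mul_left_comm, ← Finset.prod_mul_distrib]
  simp only [pow_sub_one_mul (hE _)]

lemma injective_update_and_mem_Icc {n : ℕ} {e : Fin (n + 1) → ℕ} {p : Fin (n + 1)}
    (he₁ : ∀ i, i ≠ p → 1 ≤ e i ∧ e i ≤ n) (he₂ : ∀ i j, i ≠ p → j ≠ p → e i = e j → i = j) :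
    Function.Injective (Function.update e p (n + 1)) ∧
      ∀ i, Function.update e p (n + 1) i ∈ Finset.Icc 1 (n + 1) := by
  refine ⟨fun i j hij => ?_, fun i => ?_⟩
  · by_cases hi : i = p <;> by_cases hj : j = p
    · rw [hi, hj]
    · subst hi
      rw [Function.update_self, Function.update_of_ne hj] at hij
      have := he₁ j hj
      omega
    · subst hj
      rw [Function.update_self, Function.update_of_ne hi] at hij
      have := he₁ i hi
      omega
    · rw [Function.update_of_ne hi, Function.update_of_ne hj] at hij
      exact he₂ i j hi hj hij
  · by_cases hi : i = p
    · simp [hi]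
    · rw [Function.update_of_ne hi, Finset.mem_Icc]
      have := he₁ i hi
      omega

lemma prod_pow_update {ι M : Type*} [Fintype ι] [DecidableEq ι] [CommMonoid M] (x : ι → M)
    (e : ι → ℕ) (p : ι) (k : ℕ) :
    ∏ i, x i ^ Function.update e p k i = x p ^ k * ∏ i ∈ Finset.univ.erase p, x i ^ e i := by
  rw [← Finset.mul_prod_erase _ _ (Finset.mem_univ p), Function.update_self]
  exact congrArg _ (Finset.prod_congr rfl fun i hi => by
    rw [Function.update_of_ne (Finset.ne_of_mem_erase hi)])

def IntervalsInGaps {m : ℕ} (t : Fin (m + 1) → ℝ) (α β : Fin m → ℝ) : Prop :=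
  ∀ i, t i.castSucc ≤ α i ∧ α i < β i ∧ β i ≤ t i.succ

lemma IntervalsInGaps.hi_le_lo {m : ℕ} {t : Fin (m + 2) → ℝ} {α β : Fin (m + 1) → ℝ}
    (h : IntervalsInGaps t α β) (j : Fin m) : β j.castSucc ≤ α j.succ := by
  have h₁ := (h j.castSucc).2.2
  have h₂ := (h j.succ).1
  rw [Fin.succ_castSucc] at h₁
  exact h₁.trans h₂

def middleThirds {m : ℕ} (α β : Fin m → ℝ) : Set (Fin m → ℝ) :=
  univ.pi fun i => Ioo (α i + (β i - α i) / 3) (β i - (β i - α i) / 3)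

lemma volume_middleThirds {m : ℕ} (α β : Fin m → ℝ) :
    volume (middleThirds α β) = ∏ i, ENNReal.ofReal ((β i - α i) / 3) := by
  simp only [middleThirds, volume_pi_pi, Real.volume_Ioo]
  congr! 2
  ring

lemma IntervalsInGaps.middleThirds_subset {m : ℕ} {t : Fin (m + 1) → ℝ} {α β : Fin m → ℝ}
    (h : IntervalsInGaps t α β) : middleThirds α β ⊆ interlacingBox t := by
  intro s hs i _
  obtain ⟨hlo, hhi⟩ := hs i (mem_univ i)
  obtain ⟨h₁, h₂, h₃⟩ := h i
  exact ⟨by linarith, by linarith⟩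

/-- Endpoints of the third of the interval `q.succAbove j` on the side facing the interval `q`. -/
noncomputable def facingThirdLo {m : ℕ} (q : Fin (m + 1)) (α β : Fin (m + 1) → ℝ) (j : Fin m) :
    ℝ :=
  if j.castSucc < q then β (q.succAbove j) - (β (q.succAbove j) - α (q.succAbove j)) / 3
  else α (q.succAbove j)

noncomputable def facingThirdHi {m : ℕ} (q : Fin (m + 1)) (α β : Fin (m + 1) → ℝ) (j : Fin m) :
    ℝ :=
  if j.castSucc < q then β (q.succAbove j)
  else α (q.succAbove j) + (β (q.succAbove j) - α (q.succAbove j)) / 3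

lemma facingThirdHi_sub_facingThirdLo {m : ℕ} (q : Fin (m + 1)) (α β : Fin (m + 1) → ℝ)
    (j : Fin m) :
    facingThirdHi q α β j - facingThirdLo q α β j
      = (β (q.succAbove j) - α (q.succAbove j)) / 3 := by
  unfold facingThirdHi facingThirdLo
  split_ifs <;> ring

lemma Ioo_facingThird_subset {m : ℕ} (q : Fin (m + 1)) {α β : Fin (m + 1) → ℝ}
    (hαβ : ∀ i, α i < β i) (j : Fin m) :
    Ioo (facingThirdLo q α β j) (facingThirdHi q α β j)
      ⊆ Ioo (α (q.succAbove j)) (β (q.succAbove j)) := by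
  have := hαβ (q.succAbove j)
  unfold facingThirdHi facingThirdLo
  split_ifs <;> exact Ioo_subset_Ioo (by linarith) (by linarith)

lemma IntervalsInGaps.facingThirds {m : ℕ} {t : Fin (m + 2) → ℝ} {α β : Fin (m + 1) → ℝ}
    (h : IntervalsInGaps t α β) (q : Fin (m + 1)) {s : Fin (m + 1) → ℝ}
    (hs : s ∈ middleThirds α β) :
    IntervalsInGaps s (facingThirdLo q α β) (facingThirdHi q α β) := by
  intro j
  have hmid i := hs i (mem_univ i)
  have hgap := h.hi_le_lo j
  have hjs := (h j.succ).2.1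
  have hjc := (h j.castSucc).2.1
  obtain ⟨h₁, h₂⟩ := hmid j.castSucc
  obtain ⟨h₃, h₄⟩ := hmid j.succ
  unfold facingThirdHi facingThirdLo
  split_ifs with hj
  · rw [Fin.succAbove_of_castSucc_lt q j hj]
    refine ⟨by linarith, by linarith, by linarith⟩
  · rw [Fin.succAbove_of_le_castSucc q j (not_lt.1 hj)]
    refine ⟨by linarith, by linarith, by linarith⟩

noncomputable def psiLowerConst : ℕ → ℝ
  | 0 => 1
  | m + 1 => psiLowerConst m / 3 ^ ∑ k ∈ Finset.Icc 1 (m + 2), k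

lemma psiLowerConst_pos : ∀ m, 0 < psiLowerConst m
  | 0 => one_pos
  | m + 1 => div_pos (psiLowerConst_pos m) (by positivity)

lemma psiLowerConst_succ_mul_prod {m : ℕ} (Δ : Fin (m + 2) → ℝ) {E : Fin (m + 2) → ℕ}
    (hinj : Function.Injective E) (hE : ∀ i, E i ∈ Finset.Icc 1 (m + 2)) {q : Fin (m + 2)}
    (hq : E q = 1) :
    psiLowerConst (m + 1) * ∏ i, Δ i ^ E i
      = (psiLowerConst m * ∏ j, (Δ (q.succAbove j) / 3) ^ (E (q.succAbove j) - 1))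
        * ∏ i, Δ i / 3 := by
  have hE₀ j : E (q.succAbove j) ≠ 0 := (Nat.one_le_iff_ne_zero.1 (Finset.mem_Icc.1 (hE _)).1)
  rw [mul_assoc, prod_pow_pred_succAbove_mul_prod (fun i => Δ i / 3) hq hE₀]
  simp only [div_pow, Finset.prod_div_distrib, Finset.prod_pow_eq_pow_sum, sum_eq_sum_Icc hinj hE,
    psiLowerConst]
  ring

theorem ofReal_psiLowerConst_mul_prod_le_lintegral_psi (m : ℕ) {t : Fin (m + 2) → ℝ}
    {α β : Fin (m + 1) → ℝ} (h : IntervalsInGaps t α β) {E : Fin (m + 1) → ℕ}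
    (hinj : Function.Injective E) (hE : ∀ i, E i ∈ Finset.Icc 1 (m + 1)) {p : Fin (m + 1)}
    (hp : E p = m + 1) :
    ENNReal.ofReal (psiLowerConst m * ∏ i, (β i - α i) ^ E i)
      ≤ ∫⁻ u in Ioo (α p) (β p), ENNReal.ofReal (psi (m + 2) u t) := by
  induction m with
  | zero =>
    obtain rfl : p = 0 := Fin.fin_one_eq_zero p
    obtain ⟨h₁, -, h₂⟩ := h 0
    calc ENNReal.ofReal (psiLowerConst 0 * ∏ i, (β i - α i) ^ E i)
        = ∫⁻ _ in Ioo (α 0) (β 0), 1 := by simp [psiLowerConst, hp]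
      _ ≤ _ := setLIntegral_mono' measurableSet_Ioo fun u hu => by
        have hu' : u ∈ Icc (t 0) (t 1) := ⟨h₁.trans hu.1.le, hu.2.le.trans h₂⟩
        rw [psi, indicator_of_mem hu', ENNReal.ofReal_one]
  | succ m ih =>
    obtain ⟨q, hq⟩ : ∃ q, E q = 1 := by
      have := Finset.left_mem_Icc.2 (by omega : 1 ≤ m + 2)
      rw [← image_univ_eq_Icc hinj hE] at this
      simpa using this
    obtain ⟨p, rfl⟩ := Fin.exists_succAbove_eq (show p ≠ q by rintro rfl; omega)
    obtain ⟨hinj', hE'⟩ := injective_pred_succAbove_and_mem_Icc hinj hE hq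
    have hΔ i : 0 ≤ (β i - α i) / 3 := by linarith [(h i).2.1]
    calc ENNReal.ofReal (psiLowerConst (m + 1) * ∏ i, (β i - α i) ^ E i)
        = ∫⁻ _ in middleThirds α β, ENNReal.ofReal (psiLowerConst m *
            ∏ j, ((β (q.succAbove j) - α (q.succAbove j)) / 3) ^ (E (q.succAbove j) - 1)) := by
          rw [setLIntegral_const, volume_middleThirds, ← ENNReal.ofReal_prod_of_nonneg
            fun i _ => hΔ i, ← ENNReal.ofReal_mul' (Finset.prod_nonneg fun i _ => hΔ i),
            psiLowerConst_succ_mul_prod _ hinj hE hq]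
      _ ≤ ∫⁻ s in middleThirds α β, ∫⁻ u in Ioo (facingThirdLo q α β p) (facingThirdHi q α β p),
            ENNReal.ofReal (psi (m + 2) u s) :=
          setLIntegral_mono' (.univ_pi fun _ => measurableSet_Ioo) fun s hs => by
            simpa only [facingThirdHi_sub_facingThirdLo] using
              ih (h.facingThirds q hs) hinj' hE' (by simp [hp])
      _ = ∫⁻ u in Ioo (facingThirdLo q α β p) (facingThirdHi q α β p),
            ∫⁻ s in middleThirds α β, ENNReal.ofReal (psi (m + 2) u s) :=
          (lintegral_lintegral_swap (measurable_psi _).ennreal_ofReal.aemeasurable).symm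
      _ ≤ ∫⁻ u in Ioo (α (q.succAbove p)) (β (q.succAbove p)),
            ∫⁻ s in interlacingBox t, ENNReal.ofReal (psi (m + 2) u s) :=
          (lintegral_mono_set (Ioo_facingThird_subset q (fun i => (h i).2.1) p)).trans
            (lintegral_mono fun u => lintegral_mono_set h.middleThirds_subset)
      _ = ∫⁻ u in Ioo (α (q.succAbove p)) (β (q.succAbove p)),
            ENNReal.ofReal (psi (m + 3) u t) := by
          simp only [ofReal_psi_add_three]

theorem psiLowerConst_mul_prod_le_setIntegral_psi (m : ℕ) {t : Fin (m + 2) → ℝ}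
    {α β : Fin (m + 1) → ℝ} (h : IntervalsInGaps t α β) {E : Fin (m + 1) → ℕ}
    (hinj : Function.Injective E) (hE : ∀ i, E i ∈ Finset.Icc 1 (m + 1)) {p : Fin (m + 1)}
    (hp : E p = m + 1) :
    psiLowerConst m * ∏ i, (β i - α i) ^ E i ≤ ∫ u in Ioo (α p) (β p), psi (m + 2) u t := by
  have := ofReal_psiLowerConst_mul_prod_le_lintegral_psi m h hinj hE hp
  rwa [← ofReal_integral_eq_lintegral_ofReal (integrableOn_psi t measure_Ioo_lt_top.ne)
      (.of_forall fun u => psi_nonneg _ u t),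
    ENNReal.ofReal_le_ofReal_iff (setIntegral_nonneg measurableSet_Ioo fun u _ => psi_nonneg _ u t)]
      at this

lemma mul_setIntegral_le_setIntegral_sum_indicator_mul {m : ℕ} {g : ℝ → ℝ} {U : Set ℝ}
    (hg : IntegrableOn g U) (hg₀ : ∀ u, 0 ≤ g u) {α β c : Fin m → ℝ} (hc : ∀ i, 0 ≤ c i)
    {p : Fin m} (hpU : Ioo (α p) (β p) ⊆ U) :
    c p * ∫ u in Ioo (α p) (β p), g u
      ≤ ∫ u in U, (∑ i, c i * (Ioo (α i) (β i)).indicator (fun _ => (1 : ℝ)) u) * g u := by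
  set f : ℝ → ℝ := fun u => ∑ i, c i * (Ioo (α i) (β i)).indicator (fun _ => (1 : ℝ)) u
  have hterm i u : 0 ≤ c i * (Ioo (α i) (β i)).indicator (fun _ => (1 : ℝ)) u :=
    mul_nonneg (hc i) (indicator_nonneg (fun _ _ => zero_le_one) u)
  have hf_le u : ‖f u‖ ≤ ∑ i, c i := by
    rw [Real.norm_of_nonneg (Finset.sum_nonneg fun i _ => hterm i u)]
    refine Finset.sum_le_sum fun i _ => mul_le_of_le_one_right (hc i) ?_
    exact indicator_le_self' (fun _ _ => zero_le_one) u
  have hf : Measurable f := Finset.measurable_sum _ fun i _ =>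
    measurable_const.mul (measurable_const.indicator measurableSet_Ioo)
  have hfg : IntegrableOn (fun u => f u * g u) U :=
    hg.bdd_mul hf.aestronglyMeasurable (.of_forall hf_le)
  calc c p * ∫ u in Ioo (α p) (β p), g u = ∫ u in Ioo (α p) (β p), c p * g u :=
        (integral_const_mul _ _).symm
    _ ≤ ∫ u in Ioo (α p) (β p), f u * g u := by
        refine setIntegral_mono_on ((hg.mono_set hpU).const_mul _) (hfg.mono_set hpU)
          measurableSet_Ioo fun u hu => mul_le_mul_of_nonneg_right ?_ (hg₀ u)
        calc c p = c p * (Ioo (α p) (β p)).indicator (fun _ => (1 : ℝ)) u := by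
              rw [indicator_of_mem hu, mul_one]
          _ ≤ f u := Finset.single_le_sum (fun i _ => hterm i u) (Finset.mem_univ p)
    _ ≤ ∫ u in U, f u * g u :=
        setIntegral_mono_set hfg (.of_forall fun u => mul_nonneg
          (Finset.sum_nonneg fun i _ => hterm i u) (hg₀ u)) hpU.eventuallyLE

theorem stmt_3 (d : ℕ) (hd : 2 ≤ d) :
    ∃ c0 : ℝ, 0 < c0 ∧
      ∀ t : Fin d → ℝ, StrictMono t →
      ∀ α β : Fin (d - 1) → ℝ,
      (∀ i : Fin (d - 1),
        t ⟨(i : ℕ), by have := i.isLt; omega⟩ ≤ α i ∧ α i < β i ∧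
          β i ≤ t ⟨(i : ℕ) + 1, by have := i.isLt; omega⟩) →
      ∀ c : Fin (d - 1) → ℝ, (∀ i, 0 ≤ c i) →
      ∀ p : Fin (d - 1), ∀ e : Fin (d - 1) → ℕ,
      (∀ i, i ≠ p → 1 ≤ e i ∧ e i ≤ d - 2) →
      (∀ i j, i ≠ p → j ≠ p → e i = e j → i = j) →
      c0 * (c p * (β p - α p) ^ (d - 1) *
          ∏ i ∈ Finset.univ.erase p, (β i - α i) ^ e i)
        ≤ ∫ u in Set.Ioo (t ⟨0, by omega⟩) (t ⟨d - 1, by omega⟩),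
            (∑ i, c i * Set.indicator (Set.Ioo (α i) (β i)) (fun _ => (1 : ℝ)) u) *
              psi d u t := by
  obtain ⟨n, rfl⟩ : ∃ n, d = n + 2 := ⟨d - 2, by omega⟩
  refine ⟨psiLowerConst n, psiLowerConst_pos n, fun t ht α β h c hc p e he₁ he₂ => ?_⟩
  obtain ⟨hinj, hE⟩ := injective_update_and_mem_Icc he₁ he₂
  have hcore := psiLowerConst_mul_prod_le_setIntegral_psi n h hinj hE (Function.update_self p _ e)
  rw [prod_pow_update] at hcore
  have hsub : Ioo (α p) (β p) ⊆ Ioo (t ⟨0, by omega⟩) (t ⟨n + 2 - 1, by omega⟩) :=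
    Ioo_subset_Ioo ((ht.monotone (Fin.zero_le _)).trans (h p).1)
      ((h p).2.2.trans (ht.monotone (Fin.le_last _)))
  calc psiLowerConst n * (c p * (β p - α p) ^ (n + 1) *
        ∏ i ∈ Finset.univ.erase p, (β i - α i) ^ e i)
      = c p * (psiLowerConst n * ((β p - α p) ^ (n + 1) *
          ∏ i ∈ Finset.univ.erase p, (β i - α i) ^ e i)) := by ring
    _ ≤ c p * ∫ u in Ioo (α p) (β p), psi (n + 2) u t := mul_le_mul_of_nonneg_left hcore (hc p)
    _ ≤ _ := mul_setIntegral_le_setIntegral_sum_indicator_mul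
        (integrableOn_psi t measure_Ioo_lt_top.ne) (fun u => psi_nonneg _ u t) hc hsub
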